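/- Let n ≥ 2 be an integer and M > 0. Then for every continuously differentiable f : [2M, ∞) → ℝ satisfying ∫_{2M}^{∞} ( s² f′(s)² + f(s)² ) ds < ∞, one has ∫_{2M}^{∞} [ s(s − 2M) f′(s)² + ( (n+2)/(n−1)² − 2Mn²/((n−1)² s) ) f(s)² ] ds ≥ 0. -/

import Mathlib

/-!
Write `m = n` and `β = m/(m-1)`. On `s ≥ 2M` the integrand exceeds the derivative of
`-β (s-2M) f²` by the sum of squares
`((s-2M)((m-1) s f' + m f)² + 2 s f²) / ((m-1)² s)`, so `∫_{2M}^T` of it is at least the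
boundary term `-β (T-2M) f(T)²`. As `f²` is integrable, `T f(T)²` cannot stay above any `ε > 0`
(else `f² ≥ ε/T`), so along some `T → ∞` the boundary term is arbitrarily small.
-/

open MeasureTheory Set Filter Topology

theorem frequently_mul_lt_of_integrableOn_Ioi {h : ℝ → ℝ} {a ε : ℝ}
    (hh : IntegrableOn h (Ioi a)) (hε : 0 < ε) : ∃ᶠ s in atTop, s * h s < ε := by
  by_contra hlarge
  simp only [not_frequently, not_lt] at hlarge
  obtain ⟨T, hT⟩ := eventually_atTop.1 hlarge
  set b := max T (max a 0)
  have hb : Ioi b ⊆ Ioi a := Ioi_subset_Ioi (le_max_of_le_right (le_max_left _ _))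
  refine not_integrableOn_Ioi_inv (a := b) ?_
  refine ((hh.mono_set hb).const_mul ε⁻¹).mono' measurable_inv.aestronglyMeasurable ?_
  filter_upwards [ae_restrict_mem measurableSet_Ioi] with s hs
  have hs0 : 0 < s := lt_of_le_of_lt (le_max_of_le_right (le_max_right _ _)) hs
  have hsT : T ≤ s := (le_max_left _ _).trans hs.le
  rw [Real.norm_eq_abs, abs_of_pos (inv_pos.2 hs0), inv_le_iff_one_le_mul₀ hs0]
  calc (1 : ℝ) = ε⁻¹ * ε := (inv_mul_cancel₀ hε.ne').symm
    _ ≤ ε⁻¹ * (s * h s) := by gcongr; exact hT s hsT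
    _ = ε⁻¹ * h s * s := by ring

section WeightedSquare

variable {f : ℝ → ℝ} {a T : ℝ}

theorem ContDiffOn.intervalIntegrable_deriv_of_Ici (hf : ContDiffOn ℝ 1 f (Ici a))
    (hT : a ≤ T) :
    IntervalIntegrable (deriv f) volume a T := by
  have hcont : ContinuousOn (derivWithin f (Ici a)) (Icc a T) :=
    (hf.continuousOn_derivWithin (uniqueDiffOn_Ici a) le_rfl).mono Icc_subset_Ici_self
  refine (hcont.intervalIntegrable_of_Icc hT).congr ?_
  intro s hs
  rw [uIoc_of_le hT] at hs
  exact derivWithin_of_mem_nhds (Ici_mem_nhds hs.1)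

theorem intervalIntegrable_sq_add_sub_mul_deriv (hf : ContDiffOn ℝ 1 f (Ici a)) (hT : a ≤ T) :
    IntervalIntegrable (fun s => f s ^ 2 + (s - a) * (2 * f s * deriv f s)) volume a T := by
  have hfc : ContinuousOn f (Icc a T) := hf.continuousOn.mono Icc_subset_Ici_self
  have hcont : ContinuousOn (fun s => (s - a) * (2 * f s)) (uIcc a T) := by
    rw [uIcc_of_le hT]; fun_prop
  refine (hfc.pow 2).intervalIntegrable_of_Icc hT |>.add ?_
  simpa only [mul_assoc] using (hf.intervalIntegrable_deriv_of_Ici hT).continuousOn_mul hcont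

theorem integral_sq_add_sub_mul_deriv (hf : ContDiffOn ℝ 1 f (Ici a)) (hT : a ≤ T) :
    ∫ s in a..T, (f s ^ 2 + (s - a) * (2 * f s * deriv f s)) = (T - a) * f T ^ 2 := by
  have hderiv : ∀ s ∈ Ioo a T, HasDerivAt (fun s => (s - a) * f s ^ 2)
      (f s ^ 2 + (s - a) * (2 * f s * deriv f s)) s := by
    intro s hs
    have hfs : HasDerivAt f (deriv f s) s :=
      ((hf.differentiableOn one_ne_zero).differentiableAt (Ici_mem_nhds hs.1)).hasDerivAt
    simpa using ((hasDerivAt_id s).sub_const a).fun_mul (hfs.fun_pow 2)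
  have hcont : ContinuousOn (fun s => (s - a) * f s ^ 2) (Icc a T) := by
    have : ContinuousOn f (Icc a T) := hf.continuousOn.mono Icc_subset_Ici_self
    fun_prop
  rw [intervalIntegral.integral_eq_sub_of_hasDerivAt_of_le hT hcont hderiv
    (intervalIntegrable_sq_add_sub_mul_deriv hf hT)]
  simp

end WeightedSquare

noncomputable def hardyIntegrand (m M : ℝ) (f : ℝ → ℝ) (s : ℝ) : ℝ :=
  s*(s - 2*M) * (deriv f s)^2 + ((m + 2)/(m - 1)^2 - 2*M*m^2/((m - 1)^2 * s)) * (f s)^2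

section Hardy

variable {m M : ℝ}

theorem hardy_pointwise_lower_bound (hm : m ≠ 1) {s : ℝ} (hs0 : 0 < s) (hs : 2*M ≤ s)
    (x y : ℝ) :
    -(m/(m-1)) * (y^2 + (s - 2*M) * (2*y*x))
      ≤ s*(s - 2*M) * x^2 + ((m + 2)/(m - 1)^2 - 2*M*m^2/((m - 1)^2 * s)) * y^2 := by
  have hm1 : m - 1 ≠ 0 := sub_ne_zero.2 hm
  have hsquare : s*(s - 2*M) * x^2 + ((m + 2)/(m - 1)^2 - 2*M*m^2/((m - 1)^2 * s)) * y^2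
      - -(m/(m-1)) * (y^2 + (s - 2*M) * (2*y*x))
      = ((s - 2*M) * ((m - 1)*s*x + m*y)^2 + 2*s*y^2) / ((m - 1)^2 * s) := by
    field_simp
    ring
  have hnonneg : 0 ≤ ((s - 2*M) * ((m - 1)*s*x + m*y)^2 + 2*s*y^2) / ((m - 1)^2 * s) := by
    have : 0 ≤ s - 2*M := sub_nonneg.2 hs
    positivity
  linarith

theorem neg_mul_le_integral_hardyIntegrand (hm : m ≠ 1) (hM : 0 < M) {f : ℝ → ℝ} {T : ℝ}
    (hf : ContDiffOn ℝ 1 f (Ici (2*M))) (hT : 2*M ≤ T)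
    (hG : IntervalIntegrable (hardyIntegrand m M f) volume (2*M) T) :
    -(m/(m-1)) * ((T - 2*M) * f T ^ 2) ≤ ∫ s in (2*M)..T, hardyIntegrand m M f s := by
  rw [← integral_sq_add_sub_mul_deriv hf hT, ← intervalIntegral.integral_const_mul]
  refine intervalIntegral.integral_mono_on hT
    ((intervalIntegrable_sq_add_sub_mul_deriv hf hT).const_mul _) hG fun s hs => ?_
  exact hardy_pointwise_lower_bound hm (by linarith [hs.1]) hs.1 (deriv f s) (f s)

theorem integral_hardyIntegrand_nonneg (hm : 1 < m) (hM : 0 < M) {f : ℝ → ℝ}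
    (hf : ContDiffOn ℝ 1 f (Ici (2*M))) (hf2 : IntegrableOn (fun s => f s ^ 2) (Ioi (2*M)))
    (hG : IntegrableOn (hardyIntegrand m M f) (Ioi (2*M))) :
    0 ≤ ∫ s in Ioi (2*M), hardyIntegrand m M f s := by
  have hβ : 0 < m/(m-1) := div_pos (by linarith) (by linarith)
  have hlim := intervalIntegral_tendsto_integral_Ioi (2*M) hG tendsto_id
  refine le_of_forall_sub_le fun ε hε => ge_of_tendsto_of_frequently hlim ?_
  refine ((frequently_mul_lt_of_integrableOn_Ioi hf2 (div_pos hε hβ)).and_eventually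
    (eventually_ge_atTop (2*M))).mono fun T ⟨hsmall, hT⟩ => ?_
  have hGT : IntervalIntegrable (hardyIntegrand m M f) volume (2*M) T :=
    (intervalIntegrable_iff_integrableOn_Ioc_of_le hT).2 (hG.mono_set Ioc_subset_Ioi_self)
  have hboundary : (T - 2*M) * f T ^ 2 ≤ ε / (m/(m-1)) := by nlinarith [sq_nonneg (f T)]
  calc 0 - ε = -(m/(m-1)) * (ε / (m/(m-1))) := by
        rw [neg_mul, mul_div_cancel₀ _ hβ.ne', zero_sub]
    _ ≤ -(m/(m-1)) * ((T - 2*M) * f T ^ 2) := by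
        rw [neg_mul, neg_mul, neg_le_neg_iff]
        exact mul_le_mul_of_nonneg_left hboundary hβ.le
    _ ≤ ∫ s in (2*M)..T, hardyIntegrand m M f s :=
        neg_mul_le_integral_hardyIntegrand hm.ne' hM hf hT hGT

end Hardy

theorem hardy_inequality_covector
    (n : ℕ) (hn : 2 ≤ n) (M : ℝ) (hM : 0 < M)
    (f : ℝ → ℝ) (hf : ContDiffOn ℝ 1 f (Ici (2*M)))
    (hfin : IntegrableOn (fun s => s^2 * (deriv f s)^2 + (f s)^2) (Ici (2*M))) :
    0 ≤ ∫ s in Ici (2*M),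
      (s*(s - 2*M) * (deriv f s)^2
        + (((n:ℝ) + 2)/((n:ℝ) - 1)^2 - 2*M*(n:ℝ)^2/(((n:ℝ) - 1)^2 * s)) * (f s)^2) := by
  change 0 ≤ ∫ s in Ici (2*M), hardyIntegrand n M f s
  by_cases hG : IntegrableOn (hardyIntegrand n M f) (Ici (2*M))
  swap
  · rw [integral_undef hG] -- junk value of a non-integrable Bochner integral
  have hm : (1 : ℝ) < n := by exact_mod_cast hn
  have hf2 : IntegrableOn (fun s => f s ^ 2) (Ioi (2*M)) := by
    refine (hfin.mono_set Ioi_subset_Ici_self).mono'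
      (((hf.continuousOn.mono Ioi_subset_Ici_self).aemeasurable measurableSet_Ioi).pow_const 2
        |>.aestronglyMeasurable) (Eventually.of_forall fun s => ?_)
    rw [Real.norm_eq_abs, abs_of_nonneg (sq_nonneg _)]
    nlinarith [sq_nonneg (s * deriv f s)]
  rw [integral_Ici_eq_integral_Ioi]
  exact integral_hardyIntegrand_nonneg hm hM hf hf2 (hG.mono_set Ioi_subset_Ici_self)
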